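/- Let b ∈ L²(Ω;ℝⁿ) satisfy |b(x)| ≤ a(x) for a.e. x ∈ Ω, and let p ∈ L²(Ω;ℝⁿ) be such that for every d ∈ L²(Ω;ℝⁿ) with |d(x)| ≤ a(x) a.e. one has −⟨g,d⟩ + ⟨g,b⟩ ≥ ⟨p, d − b⟩. Then there exists a measurable function m : Ω → [0,∞) with m(x) = 0 for a.e. x such that |b(x)| < a(x), and such that p(x) + g(x) = m(x) b(x) for a.e. x with a(x) > 0. -/

import Mathlib

/-!
Put `q = p + g`. Testing the subgradient inequality with the feasible field `d = a q / |q|`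
gives `∫ (a |q| - ⟪q, b⟫) ≤ 0`, while the integrand is nonnegative by Cauchy–Schwarz and
`|b| ≤ a`. Hence `⟪q, b⟫ = a |q|` a.e., and the equality case of Cauchy–Schwarz forces
`q = 0` where `|b| < a`, and `q = (|q| / a) b` where `a > 0`.
-/

open MeasureTheory RealInnerProductSpace

section Pointwise

variable {E : Type*} [NormedAddCommGroup E] [InnerProductSpace ℝ E]

lemma norm_div_norm_smul_self_le (r : ℝ) (q : E) : ‖(r / ‖q‖) • q‖ ≤ |r| := by
  rcases eq_or_ne q 0 with rfl | hq
  · simp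
  · rw [norm_smul, Real.norm_eq_abs, abs_div, abs_norm, div_mul_cancel₀ _ (norm_ne_zero_iff.2 hq)]

lemma inner_div_norm_smul_self (r : ℝ) (q : E) : ⟪q, (r / ‖q‖) • q⟫ = r * ‖q‖ := by
  rcases eq_or_ne q 0 with rfl | hq
  · simp
  · have : ‖q‖ ≠ 0 := norm_ne_zero_iff.2 hq
    rw [real_inner_smul_right, real_inner_self_eq_norm_sq]
    field_simp

lemma eq_zero_of_inner_eq_mul_norm_of_norm_lt {q b : E} {r : ℝ} (hb : ‖b‖ < r)
    (h : ⟪q, b⟫ = r * ‖q‖) : q = 0 := by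
  by_contra hq
  have hq' : 0 < ‖q‖ := norm_pos_iff.2 hq
  have := real_inner_le_norm q b
  nlinarith

lemma eq_div_smul_of_inner_eq_mul_norm {q b : E} {r : ℝ} (hb : ‖b‖ ≤ r) (hr : 0 < r)
    (h : ⟪q, b⟫ = r * ‖q‖) : q = (‖q‖ / r) • b := by
  rcases eq_or_ne q 0 with rfl | hq
  · simp
  have hq' : 0 < ‖q‖ := norm_pos_iff.2 hq
  have hbr : ‖b‖ = r := by
    refine le_antisymm hb (le_of_mul_le_mul_right ?_ hq')
    linarith [real_inner_le_norm q b]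
  have hpar : r • q = ‖q‖ • b := by
    rw [← hbr]
    exact inner_eq_norm_mul_iff_real.1 (by rw [h, hbr, mul_comm])
  rw [div_eq_inv_mul, mul_smul, ← hpar, smul_smul, inv_mul_cancel₀ hr.ne', one_smul]

end Pointwise

section Integral

variable {α : Type*} [MeasurableSpace α] {μ : Measure α}

lemma MeasureTheory.MemLp.integrable_inner {𝕜 E : Type*} [RCLike 𝕜] [NormedAddCommGroup E]
    [InnerProductSpace 𝕜 E] {f g : α → E} (hf : MemLp f 2 μ) (hg : MemLp g 2 μ) :
    Integrable (fun x => inner 𝕜 (f x) (g x)) μ :=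
  (L2.integrable_inner (𝕜 := 𝕜) (hf.toLp f) (hg.toLp g)).congr <| by
    filter_upwards [hf.coeFn_toLp, hg.coeFn_toLp] with x hfx hgx
    rw [hfx, hgx]

variable {E : Type*} [NormedAddCommGroup E] [InnerProductSpace ℝ E]

lemma integral_inner_add_sub {p g d b : α → E} (hp : MemLp p 2 μ) (hg : MemLp g 2 μ)
    (hd : MemLp d 2 μ) (hb : MemLp b 2 μ) :
    ∫ x, ⟪p x + g x, d x - b x⟫ ∂μ =
      ∫ x, ⟪p x, d x - b x⟫ ∂μ + ((∫ x, ⟪g x, d x⟫ ∂μ) - ∫ x, ⟪g x, b x⟫ ∂μ) := by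
  have hgd := hg.integrable_inner (𝕜 := ℝ) hd
  have hgb := hg.integrable_inner (𝕜 := ℝ) hb
  have hpdb : Integrable (fun x => ⟪p x, d x - b x⟫) μ := hp.integrable_inner (hd.sub hb)
  simp only [inner_add_left, inner_sub_right (g _)]
  rw [integral_add (g := fun x => ⟪g x, d x⟫ - ⟪g x, b x⟫) hpdb (hgd.sub hgb),
    integral_sub hgd hgb]

theorem ae_inner_eq_mul_norm_of_integral_inner_sub_nonpos {a : α → ℝ} {q b : α → E}
    (ha : MemLp a 2 μ) (hq : MemLp q 2 μ) (hb : MemLp b 2 μ) (hba : ∀ᵐ x ∂μ, ‖b x‖ ≤ a x)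
    (h : ∀ d : α → E, MemLp d 2 μ → (∀ᵐ x ∂μ, ‖d x‖ ≤ a x) → ∫ x, ⟪q x, d x - b x⟫ ∂μ ≤ 0) :
    ∀ᵐ x ∂μ, ⟪q x, b x⟫ = a x * ‖q x‖ := by
  set d : α → E := fun x => (a x / ‖q x‖) • q x
  have hd : MemLp d 2 μ := by
    refine ha.of_le ((ha.1.aemeasurable.div hq.1.norm.aemeasurable).aestronglyMeasurable.smul
      hq.1) (Filter.Eventually.of_forall fun x => ?_)
    simpa using norm_div_norm_smul_self_le (a x) (q x)
  have hda : ∀ᵐ x ∂μ, ‖d x‖ ≤ a x := by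
    filter_upwards [hba] with x hx
    simpa [abs_of_nonneg ((norm_nonneg _).trans hx)] using norm_div_norm_smul_self_le (a x) (q x)
  have hgap : (fun x => ⟪q x, d x - b x⟫) = fun x => a x * ‖q x‖ - ⟪q x, b x⟫ := by
    ext x
    rw [inner_sub_right, inner_div_norm_smul_self]
  have hgap_nonneg : 0 ≤ᵐ[μ] fun x => a x * ‖q x‖ - ⟪q x, b x⟫ := by
    filter_upwards [hba] with x hx
    have := real_inner_le_norm (q x) (b x)
    simp only [Pi.zero_apply, sub_nonneg]
    nlinarith [norm_nonneg (q x)]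
  have hgap_int : Integrable (fun x => a x * ‖q x‖ - ⟪q x, b x⟫) μ := by
    rw [← hgap]
    exact hq.integrable_inner (hd.sub hb)
  have hgap_zero := (integral_eq_zero_iff_of_nonneg_ae hgap_nonneg hgap_int).1 <|
    le_antisymm (hgap ▸ h d hd hda) (integral_nonneg_of_ae hgap_nonneg)
  filter_upwards [hgap_zero] with x hx
  exact (sub_eq_zero.1 hx).symm

end Integral

theorem stmt_3_general {n : ℕ}
    (μ : Measure (EuclideanSpace ℝ (Fin n)))
    (a : EuclideanSpace ℝ (Fin n) → ℝ) (ha2 : MemLp a 2 μ)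
    (g : EuclideanSpace ℝ (Fin n) → EuclideanSpace ℝ (Fin n)) (hg : MemLp g 2 μ)
    (b : EuclideanSpace ℝ (Fin n) → EuclideanSpace ℝ (Fin n)) (hb : MemLp b 2 μ)
    (hba : ∀ᵐ x ∂μ, ‖b x‖ ≤ a x)
    (p : EuclideanSpace ℝ (Fin n) → EuclideanSpace ℝ (Fin n)) (hp : MemLp p 2 μ)
    (hsub : ∀ d : EuclideanSpace ℝ (Fin n) → EuclideanSpace ℝ (Fin n),
      MemLp d 2 μ → (∀ᵐ x ∂μ, ‖d x‖ ≤ a x) →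
      (∫ x, ⟪p x, d x - b x⟫ ∂μ) ≤
        -(∫ x, ⟪g x, d x⟫ ∂μ) + ∫ x, ⟪g x, b x⟫ ∂μ) :
    ∃ m : EuclideanSpace ℝ (Fin n) → ℝ,
      Measurable m ∧ (∀ x, 0 ≤ m x) ∧
      (∀ᵐ x ∂μ, ‖b x‖ < a x → m x = 0) ∧
      (∀ᵐ x ∂μ, 0 < a x → p x + g x = m x • b x) := by
  have heq : ∀ᵐ x ∂μ, ⟪p x + g x, b x⟫ = a x * ‖p x + g x‖ :=
    ae_inner_eq_mul_norm_of_integral_inner_sub_nonpos ha2 (hp.add hg) hb hba fun d hd hda => by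
      rw [integral_inner_add_sub hp hg hd hb]
      linarith [hsub d hd hda]
  have hm : AEMeasurable (fun x => ‖p x + g x‖ / a x) μ :=
    (hp.add hg).1.norm.aemeasurable.div ha2.1.aemeasurable
  refine ⟨fun x => |hm.mk _ x|, hm.measurable_mk.abs, fun x => abs_nonneg _, ?_, ?_⟩
  · filter_upwards [heq, hm.ae_eq_mk] with x hx hmx hlt
    rw [← hmx, eq_zero_of_inner_eq_mul_norm_of_norm_lt hlt hx]
    simp
  · filter_upwards [heq, hm.ae_eq_mk, hba] with x hx hmx hbx hpos
    rw [← hmx, abs_of_nonneg (div_nonneg (norm_nonneg _) hpos.le)]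
    exact eq_div_smul_of_inner_eq_mul_norm hbx hpos hx

/-- If `|b(x)| ≤ a(x)` a.e. and `p ∈ L²(Ω;ℝⁿ)` is a subgradient of `F*`
at `b` (i.e. `-⟨g,d⟩ + ⟨g,b⟩ ≥ ⟨p, d - b⟩` for all feasible `d`), then there is a
measurable `m : Ω → [0,∞)` vanishing a.e. on `{|b| < a}` such that
`p + g = m·b` a.e. on `{a > 0}`. -/
theorem stmt_3 {n : ℕ} (hn : 2 ≤ n) (Ω : Set (EuclideanSpace ℝ (Fin n)))
    (hΩopen : IsOpen Ω) (hΩbdd : Bornology.IsBounded Ω)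
    (μ : Measure (EuclideanSpace ℝ (Fin n))) (hμ : μ = volume.restrict Ω)
    (a : EuclideanSpace ℝ (Fin n) → ℝ) (ha2 : MemLp a 2 μ) (ha0 : ∀ᵐ x ∂μ, 0 ≤ a x)
    (g : EuclideanSpace ℝ (Fin n) → EuclideanSpace ℝ (Fin n)) (hg : MemLp g 2 μ)
    (b : EuclideanSpace ℝ (Fin n) → EuclideanSpace ℝ (Fin n)) (hb : MemLp b 2 μ)
    (hba : ∀ᵐ x ∂μ, ‖b x‖ ≤ a x)
    (p : EuclideanSpace ℝ (Fin n) → EuclideanSpace ℝ (Fin n)) (hp : MemLp p 2 μ)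
    (hsub : ∀ d : EuclideanSpace ℝ (Fin n) → EuclideanSpace ℝ (Fin n),
      MemLp d 2 μ → (∀ᵐ x ∂μ, ‖d x‖ ≤ a x) →
      (∫ x, ⟪p x, d x - b x⟫ ∂μ) ≤
        -(∫ x, ⟪g x, d x⟫ ∂μ) + ∫ x, ⟪g x, b x⟫ ∂μ) :
    ∃ m : EuclideanSpace ℝ (Fin n) → ℝ,
      Measurable m ∧ (∀ x, 0 ≤ m x) ∧
      (∀ᵐ x ∂μ, ‖b x‖ < a x → m x = 0) ∧
      (∀ᵐ x ∂μ, 0 < a x → p x + g x = m x • b x) :=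
  stmt_3_general μ a ha2 g hg b hb hba p hp hsub
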